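/- The qutrit T gate T = diag(1, e^{2πi/9}, e^{-2πi/9}) is in the third level of the Clifford hierarchy: T X T† X† and T Z T† Z† are Clifford unitaries, where X and Z are the qutrit Paulis. -/

import Mathlib

open Matrix

noncomputable section

/-- The primitive third root of unity `ω = e^{2πi/3}`. -/
def ω : ℂ := Complex.exp (2 * Real.pi * Complex.I / 3)

/-- The qutrit Pauli X: `X|k⟩ = |k+1 mod 3⟩`. -/
def X : Matrix (ZMod 3) (ZMod 3) ℂ :=
  Matrix.of fun j k => if j = k + 1 then 1 else 0

/-- The qutrit Pauli Z: `Z = diag(1, ω, ω²)`. -/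
def Z : Matrix (ZMod 3) (ZMod 3) ℂ :=
  Matrix.diagonal fun k => ω ^ k.val

/-- The single-qutrit Pauli group (as a submonoid of matrices), generated by
`X`, `Z`, and the phase `ω`. -/
def PauliGrp : Submonoid (Matrix (ZMod 3) (ZMod 3) ℂ) :=
  Submonoid.closure {ω • 1, X, Z}

/-- A Clifford unitary: a unitary normalizing the Pauli group up to phase. -/
def IsClifford (U : Matrix (ZMod 3) (ZMod 3) ℂ) : Prop :=
  U ∈ unitary (Matrix (ZMod 3) (ZMod 3) ℂ) ∧
    ∀ P ∈ PauliGrp, ∃ (c : ℂ) (Q : Matrix (ZMod 3) (ZMod 3) ℂ),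
      Q ∈ PauliGrp ∧ U * P * Uᴴ = c • Q

/-- The qutrit T gate `T = diag(1, e^{2πi/9}, e^{-2πi/9})`. -/
def T : Matrix (ZMod 3) (ZMod 3) ℂ :=
  Matrix.diagonal fun k : ZMod 3 =>
    if k = 1 then Complex.exp (2 * Real.pi * Complex.I / 9)
    else if k = 2 then Complex.exp (-(2 * Real.pi * Complex.I) / 9)
    else 1

/-!
`T` is diagonal, so it commutes with `Z` and `T Z T† Z† = 1`. Conjugating a diagonal matrix by
`X` shifts its entries cyclically, so `T X T† X† = diag(ζ, ζ, ζ⁻²) = ζ • S²` with `ζ = e^{2πi/9}`,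
because `ζ⁻³ = ω²`. The Clifford unitaries are closed under products and unit phases, and `S` is
Clifford: conjugation by a unitary is multiplicative, so it is enough that `S X S† = X Z` and
`S Z S† = Z`.
-/

def S : Matrix (ZMod 3) (ZMod 3) ℂ :=
  diagonal fun k => if k = 2 then ω else 1

def ζ₉ : ℂ := Complex.exp (2 * Real.pi * Complex.I / 9)

theorem ZMod.three_cases (k : ZMod 3) : k = 0 ∨ k = 1 ∨ k = 2 := by
  revert k; decide

theorem ζ₉_ne_zero : ζ₉ ≠ 0 := Complex.exp_ne_zero _

theorem ζ₉_pow_nine : ζ₉ ^ 9 = 1 := by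
  simpa [ζ₉] using (Complex.isPrimitiveRoot_exp 9 (by norm_num)).pow_eq_one

theorem ζ₉_pow_three : ζ₉ ^ 3 = ω := by
  rw [ζ₉, ω, ← Complex.exp_nat_mul]
  congr 1
  push_cast
  ring

theorem star_ζ₉ : star ζ₉ = ζ₉⁻¹ := by
  rw [ζ₉, Complex.star_def, ← Complex.exp_conj, ← Complex.exp_neg]
  congr 1
  simp only [map_div₀, map_mul, Complex.conj_I, Complex.conj_ofReal, map_ofNat]
  ring

theorem ζ₉_mem_unitary : ζ₉ ∈ unitary ℂ :=
  Unitary.mem_iff_star_mul_self.2 (by rw [star_ζ₉, inv_mul_cancel₀ ζ₉_ne_zero])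

theorem ω_mem_unitary : ω ∈ unitary ℂ :=
  ζ₉_pow_three ▸ pow_mem ζ₉_mem_unitary 3

theorem ω_pow_three : ω ^ 3 = 1 := by
  rw [← ζ₉_pow_three, ← pow_mul, ζ₉_pow_nine]

theorem star_ω : star ω = ω ^ 2 :=
  calc star ω = star ω * ω ^ 3 := by rw [ω_pow_three, mul_one]
    _ = (star ω * ω) * ω ^ 2 := by ring
    _ = ω ^ 2 := by rw [Unitary.star_mul_self_of_mem ω_mem_unitary, one_mul]

section UnitaryMatrices

variable {n α : Type*} [Fintype n] [DecidableEq n] [CommRing α] [StarRing α]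

theorem diagonal_mem_unitary {f : n → α} (hf : ∀ i, f i ∈ unitary α) :
    diagonal f ∈ unitary (Matrix n n α) := by
  refine Unitary.mem_iff.2 ⟨?_, ?_⟩ <;>
    rw [star_eq_conjTranspose, diagonal_conjTranspose, diagonal_mul_diagonal, ← diagonal_one] <;>
    congr 1 <;> funext i
  exacts [Unitary.star_mul_self_of_mem (hf i), Unitary.mul_star_self_of_mem (hf i)]

theorem mul_mul_conjTranspose_eq_of_commute {U M : Matrix n n α}
    (hU : U ∈ unitary (Matrix n n α)) (h : Commute U M) : U * M * Uᴴ = M := by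
  rw [h.eq, mul_assoc, ← star_eq_conjTranspose, Unitary.mul_star_self_of_mem hU, mul_one]

end UnitaryMatrices

theorem T_eq_diagonal :
    T = diagonal fun k : ZMod 3 => if k = 1 then ζ₉ else if k = 2 then ζ₉⁻¹ else 1 := by
  rw [T, ζ₉, ← Complex.exp_neg, neg_div]

theorem T_mem_unitary : T ∈ unitary (Matrix (ZMod 3) (ZMod 3) ℂ) :=
  T_eq_diagonal ▸ diagonal_mem_unitary fun k => by
    split_ifs
    exacts [ζ₉_mem_unitary, star_ζ₉ ▸ Unitary.star_mem ζ₉_mem_unitary, one_mem _]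

theorem S_mem_unitary : S ∈ unitary (Matrix (ZMod 3) (ZMod 3) ℂ) :=
  diagonal_mem_unitary fun k => by split_ifs; exacts [ω_mem_unitary, one_mem _]

theorem Z_mem_unitary : Z ∈ unitary (Matrix (ZMod 3) (ZMod 3) ℂ) :=
  diagonal_mem_unitary fun _ => pow_mem ω_mem_unitary _

theorem X_apply (j k : ZMod 3) : X j k = if k = j - 1 then 1 else 0 := by
  simp only [X, of_apply, eq_sub_iff_add_eq, eq_comm]

theorem X_mul_conjTranspose : X * Xᴴ = 1 := by
  ext i j
  simp [mul_apply, conjTranspose_apply, X_apply, one_apply, apply_ite, eq_comm]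

theorem diagonal_mul_X_mul_diagonal (f g : ZMod 3 → ℂ) :
    diagonal f * X * diagonal g = X * diagonal fun k => f (k + 1) * g k := by
  ext j k
  simp only [X, diagonal_mul, mul_diagonal, of_apply]
  split_ifs with h <;> simp [h, mul_comm]

theorem X_mul_diagonal (f : ZMod 3 → ℂ) :
    X * diagonal f = diagonal (fun j => f (j - 1)) * X := by
  ext j k
  simp only [X, diagonal_mul, mul_diagonal, of_apply]
  split_ifs with h <;> simp [h]

theorem diagonal_X_commutator (f : ZMod 3 → ℂ) :
    diagonal f * X * (diagonal f)ᴴ * Xᴴ = diagonal fun j => f j * star (f (j - 1)) := by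
  rw [diagonal_conjTranspose, diagonal_mul_X_mul_diagonal, X_mul_diagonal, mul_assoc,
    X_mul_conjTranspose, mul_one]
  simp only [sub_add_cancel, Pi.star_apply]

def PhasedPauliGrp : Submonoid (Matrix (ZMod 3) (ZMod 3) ℂ) where
  carrier := {M | ∃ (c : ℂ) (Q : Matrix (ZMod 3) (ZMod 3) ℂ), Q ∈ PauliGrp ∧ M = c • Q}
  mul_mem' := by
    rintro _ _ ⟨c, P, hP, rfl⟩ ⟨d, Q, hQ, rfl⟩
    exact ⟨c * d, P * Q, mul_mem hP hQ, smul_mul_smul_comm c P d Q⟩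
  one_mem' := ⟨1, 1, one_mem _, (one_smul ℂ 1).symm⟩

theorem smul_mem_phasedPauliGrp (c : ℂ) {M : Matrix (ZMod 3) (ZMod 3) ℂ}
    (hM : M ∈ PhasedPauliGrp) : c • M ∈ PhasedPauliGrp := by
  obtain ⟨d, Q, hQ, rfl⟩ := hM
  exact ⟨c * d, Q, hQ, smul_smul c d Q⟩

theorem X_mem_pauliGrp : X ∈ PauliGrp := Submonoid.subset_closure (by simp)

theorem Z_mem_pauliGrp : Z ∈ PauliGrp := Submonoid.subset_closure (by simp)

theorem isClifford_of_conj_X_Z {U : Matrix (ZMod 3) (ZMod 3) ℂ}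
    (hU : U ∈ unitary (Matrix (ZMod 3) (ZMod 3) ℂ))
    (hX : U * X * Uᴴ ∈ PhasedPauliGrp) (hZ : U * Z * Uᴴ ∈ PhasedPauliGrp) : IsClifford U := by
  let conjU := Unitary.conjStarAlgAut ℂ _ ⟨U, hU⟩
  have hmap : PauliGrp.map conjU ≤ PhasedPauliGrp := by
    rw [PauliGrp, MonoidHom.map_mclosure, Submonoid.closure_le, Set.image_subset_iff]
    rintro P (rfl | rfl | rfl)
    · simpa using smul_mem_phasedPauliGrp ω (one_mem PhasedPauliGrp)
    · exact hX
    · exact hZ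
  exact ⟨hU, fun P hP => hmap ⟨P, hP, rfl⟩⟩

theorem isClifford_one : IsClifford 1 :=
  ⟨one_mem _, fun P hP => ⟨1, P, hP, by simp⟩⟩

theorem IsClifford.mul {U V : Matrix (ZMod 3) (ZMod 3) ℂ} (hU : IsClifford U)
    (hV : IsClifford V) : IsClifford (U * V) := by
  refine ⟨mul_mem hU.1 hV.1, fun P hP => ?_⟩
  obtain ⟨c, Q, hQ, hVQ⟩ := hV.2 P hP
  obtain ⟨d, R, hR, hUR⟩ := hU.2 Q hQ
  refine ⟨c * d, R, hR, ?_⟩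
  calc U * V * P * (U * V)ᴴ = U * (V * P * Vᴴ) * Uᴴ := by
        simp only [conjTranspose_mul, mul_assoc]
    _ = (c * d) • R := by
        rw [hVQ, mul_smul_comm, smul_mul_assoc, hUR, smul_smul]

theorem IsClifford.smul {U : Matrix (ZMod 3) (ZMod 3) ℂ} (hU : IsClifford U) {c : ℂ}
    (hc : c ∈ unitary ℂ) : IsClifford (c • U) := by
  refine ⟨Unitary.smul_mem_of_mem hc hU.1, fun P hP => ?_⟩
  rw [conjTranspose_smul, smul_mul_assoc, smul_mul_assoc, mul_smul_comm, smul_smul,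
    Unitary.mul_star_self_of_mem hc, one_smul]
  exact hU.2 P hP

theorem S_mul_X_mul_conjTranspose : S * X * Sᴴ = X * Z := by
  rw [S, diagonal_conjTranspose, diagonal_mul_X_mul_diagonal, Z]
  congr 2
  funext k
  rw [Pi.star_apply]
  obtain rfl | rfl | rfl := ZMod.three_cases k <;>
    simp +decide [star_ω, ZMod.val_ofNat, ZMod.val_one]

theorem isClifford_S : IsClifford S := by
  refine isClifford_of_conj_X_Z S_mem_unitary
    ⟨1, X * Z, mul_mem X_mem_pauliGrp Z_mem_pauliGrp, ?_⟩ ⟨1, Z, Z_mem_pauliGrp, ?_⟩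
  · rw [one_smul, S_mul_X_mul_conjTranspose]
  · rw [one_smul, mul_mul_conjTranspose_eq_of_commute S_mem_unitary
      (by rw [S, Z]; exact commute_diagonal _ _)]

theorem T_X_commutator : T * X * Tᴴ * Xᴴ = ζ₉ • (S * S) := by
  rw [T_eq_diagonal, diagonal_X_commutator, S, diagonal_mul_diagonal, ← diagonal_smul]
  congr 1
  funext k
  obtain rfl | rfl | rfl := ZMod.three_cases k <;> simp +decide [star_ζ₉]
  rw [← ζ₉_pow_three]
  field_simp [ζ₉_ne_zero]
  linear_combination -ζ₉_pow_nine

theorem T_Z_commutator : T * Z * Tᴴ * Zᴴ = 1 := by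
  rw [mul_mul_conjTranspose_eq_of_commute T_mem_unitary
      (by rw [T, Z]; exact commute_diagonal _ _),
    ← star_eq_conjTranspose, Unitary.mul_star_self_of_mem Z_mem_unitary]

/-- The qutrit T gate lies in the third level of the Clifford hierarchy:
`T X T† X†` and `T Z T† Z†` are Clifford unitaries. -/
theorem T_third_level :
    IsClifford (T * X * Tᴴ * Xᴴ) ∧ IsClifford (T * Z * Tᴴ * Zᴴ) := by
  rw [T_X_commutator, T_Z_commutator]
  exact ⟨(isClifford_S.mul isClifford_S).smul ζ₉_mem_unitary, isClifford_one⟩
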